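/- For every function g : Ω_n → ℝ, every constant A > 0, and every integer 1 ≤ ℓ ≤ n, ∫ (η̄(0) − η̄^ℓ(0)) g(η) ν_ρ(dη) ≤ (A/(2ℓ)) ∑_{y=0}^{ℓ−1} ∑_{z=0}^{y−1} (1/ξ_z) ∫ (1/c_{z,z+1}(η)) ν_ρ(dη) + (1/(2A)) D_n(g). -/
import Mathlib


open Finset

/-- The configuration obtained from `η` by exchanging the values at `x` and `x+1`. -/
def swapCfg (n : ℕ) (η : ZMod n → Bool) (x : ZMod n) : ZMod n → Bool :=
  fun y => if y = x then η (x + 1) else if y = x + 1 then η x else η y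

/-- Occupation variable as a real number. -/
noncomputable def ind (b : Bool) : ℝ := if b then 1 else 0

/-- The exchange rate `c_{x,x+1}(η) = 1 + b(η(x-1) + η(x+2))`. -/
noncomputable def rate (n : ℕ) (b : ℝ) (η : ZMod n → Bool) (x : ZMod n) : ℝ :=
  1 + b * (ind (η (x - 1)) + ind (η (x + 2)))

/-- The generator `L_n` of the speed change exclusion process with conductances `ξ`. -/
noncomputable def gen (n : ℕ) [NeZero n] (ξ : ZMod n → ℝ) (b : ℝ) (f : (ZMod n → Bool) → ℝ)
    (η : ZMod n → Bool) : ℝ :=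
  ∑ x : ZMod n, ξ x * rate n b η x * (f (swapCfg n η x) - f η)

/-- Integral with respect to the Bernoulli product measure `ν_ρ` on `Ω_n`. -/
noncomputable def intBer (n : ℕ) [NeZero n] (ρ : ℝ) (f : (ZMod n → Bool) → ℝ) : ℝ :=
  ∑ η : ZMod n → Bool, (∏ x : ZMod n, (if η x then ρ else 1 - ρ)) * f η

/-- The Dirichlet form `D_n(g) = -∫ g L_n g dν_ρ`. -/
noncomputable def dirichlet (n : ℕ) [NeZero n] (ξ : ZMod n → ℝ) (b : ℝ) (ρ : ℝ)
    (g : (ZMod n → Bool) → ℝ) : ℝ :=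
  - intBer n ρ (fun η => g η * gen n ξ b g η)


section AuxLemmas
set_option linter.unusedSectionVars false
set_option linter.unusedVariables false
variable {n : ℕ} [NeZero n]

noncomputable def BW (n : ℕ) [NeZero n] (ρ : ℝ) (η : ZMod n → Bool) : ℝ :=
  ∏ x : ZMod n, (if η x then ρ else 1 - ρ)

lemma intBer_eq (ρ : ℝ) (f : (ZMod n → Bool) → ℝ) :
    intBer n ρ f = ∑ η : ZMod n → Bool, BW n ρ η * f η := rfl

lemma BW_nonneg {ρ : ℝ} (hρ : ρ ∈ Set.Icc (0:ℝ) 1) (η : ZMod n → Bool) : 0 ≤ BW n ρ η :=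
  Finset.prod_nonneg fun x _ => by split <;> [exact hρ.1; linarith [hρ.2]]

lemma intBer_mono' {ρ : ℝ} (hρ : ρ ∈ Set.Icc (0:ℝ) 1) {f g : (ZMod n → Bool) → ℝ}
    (h : ∀ η, f η ≤ g η) : intBer n ρ f ≤ intBer n ρ g :=
  Finset.sum_le_sum fun η _ => mul_le_mul_of_nonneg_left (h η) (BW_nonneg hρ η)

lemma intBer_nonneg' {ρ : ℝ} (hρ : ρ ∈ Set.Icc (0:ℝ) 1) {f : (ZMod n → Bool) → ℝ}
    (h : ∀ η, 0 ≤ f η) : 0 ≤ intBer n ρ f :=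
  Finset.sum_nonneg fun η _ => mul_nonneg (BW_nonneg hρ η) (h η)

lemma intBer_congr (ρ : ℝ) {f g : (ZMod n → Bool) → ℝ}
    (h : ∀ η, f η = g η) : intBer n ρ f = intBer n ρ g := by
  have : f = g := funext h
  rw [this]

lemma intBer_add' (ρ : ℝ) (f g : (ZMod n → Bool) → ℝ) :
    intBer n ρ (fun η => f η + g η) = intBer n ρ f + intBer n ρ g := by
  simp [intBer_eq, mul_add, Finset.sum_add_distrib]

lemma intBer_smul' (ρ c : ℝ) (f : (ZMod n → Bool) → ℝ) :
    intBer n ρ (fun η => c * f η) = c * intBer n ρ f := by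
  simp [intBer_eq, Finset.mul_sum]; congr 1; funext η; ring

lemma intBer_neg' (ρ : ℝ) (f : (ZMod n → Bool) → ℝ) :
    intBer n ρ (fun η => - f η) = - intBer n ρ f := by
  simpa using intBer_smul' ρ (-1) f

lemma intBer_sum' {ι : Type*} (ρ : ℝ) (s : Finset ι) (f : ι → (ZMod n → Bool) → ℝ) :
    intBer n ρ (fun η => ∑ i ∈ s, f i η) = ∑ i ∈ s, intBer n ρ (f i) := by
  simp only [intBer_eq, Finset.mul_sum]
  rw [Finset.sum_comm]

lemma swapCfg_eq_comp (η : ZMod n → Bool) (z : ZMod n) :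
    swapCfg n η z = fun y => η (Equiv.swap z (z+1) y) := by
  funext y
  simp only [swapCfg, Equiv.swap_apply_def]
  split_ifs <;> rfl

lemma swapCfg_invol' (η : ZMod n → Bool) (z : ZMod n) :
    swapCfg n (swapCfg n η z) z = η := by
  rw [swapCfg_eq_comp, swapCfg_eq_comp]
  funext y; simp

lemma BW_swap (ρ : ℝ) (η : ZMod n → Bool) (z : ZMod n) :
    BW n ρ (swapCfg n η z) = BW n ρ η := by
  rw [swapCfg_eq_comp]
  unfold BW
  exact Equiv.prod_comp (Equiv.swap z (z+1)) (fun y => if η y then ρ else 1 - ρ)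

lemma intBer_comp_swap' (ρ : ℝ) (z : ZMod n) (F : (ZMod n → Bool) → ℝ) :
    intBer n ρ (fun η => F (swapCfg n η z)) = intBer n ρ F := by
  rw [intBer_eq, intBer_eq]
  refine (Fintype.sum_bijective (fun η => swapCfg n η z)
    (Function.Involutive.bijective (fun η => swapCfg_invol' η z)) _ _ fun η => ?_).symm
  rw [BW_swap, swapCfg_invol']

omit [NeZero n] in
lemma zmod_one_ne_zero (hn : 4 ≤ n) : (1 : ZMod n) ≠ 0 := by
  haveI : Fact (1 < n) := ⟨by omega⟩
  exact one_ne_zero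

omit [NeZero n] in
lemma zmod_two_ne_zero (hn : 4 ≤ n) : (2 : ZMod n) ≠ 0 := by
  intro h
  have h2 : ((2:ℕ) : ZMod n) = 0 := by exact_mod_cast h
  rw [ZMod.natCast_eq_zero_iff] at h2
  have := Nat.le_of_dvd (by norm_num) h2
  omega

omit [NeZero n] in
lemma swapCfg_at (η : ZMod n → Bool) (z : ZMod n) : swapCfg n η z z = η (z+1) := by
  simp [swapCfg]

omit [NeZero n] in
lemma swapCfg_at2 (hn : 4 ≤ n) (η : ZMod n → Bool) (z : ZMod n) :
    swapCfg n η z (z+1) = η z := by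
  have h : z + 1 ≠ z := by
    intro h
    exact zmod_one_ne_zero hn (by linear_combination h)
  simp [swapCfg, h]

omit [NeZero n] in
lemma swapCfg_other (η : ZMod n → Bool) {z y : ZMod n} (h1 : y ≠ z) (h2 : y ≠ z + 1) :
    swapCfg n η z y = η y := by
  simp [swapCfg, h1, h2]

omit [NeZero n] in
lemma rate_swap' (hn : 4 ≤ n) (b : ℝ) (η : ZMod n → Bool) (z : ZMod n) :
    rate n b (swapCfg n η z) z = rate n b η z := by
  have e1 : swapCfg n η z (z - 1) = η (z - 1) := by
    refine swapCfg_other η ?_ ?_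
    · intro h; exact zmod_one_ne_zero hn (by linear_combination -h)
    · intro h; exact zmod_two_ne_zero hn (by linear_combination -h)
  have e2 : swapCfg n η z (z + 2) = η (z + 2) := by
    refine swapCfg_other η ?_ ?_
    · intro h; exact zmod_two_ne_zero hn (by linear_combination h)
    · intro h; exact zmod_one_ne_zero hn (by linear_combination h)
  simp [rate, e1, e2]

omit [NeZero n] in
lemma rate_pos' {b : ℝ} (hb : -(1:ℝ)/2 < b) (η : ZMod n → Bool) (x : ZMod n) :
    0 < rate n b η x := by
  unfold rate
  cases η (x - 1) <;> cases η (x + 2) <;> simp [ind] <;> linarith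

lemma ind_sub_sq_le' (a c : Bool) : (ind a - ind c)^2 ≤ 1 := by
  cases a <;> cases c <;> norm_num [ind]

lemma young' {t A u v : ℝ} (ht : 0 < t) (hA : 0 < A) :
    u * v ≤ A / (2*t) * u^2 + t / (2*A) * v^2 := by
  rw [div_mul_eq_mul_div, div_mul_eq_mul_div, div_add_div _ _ (by positivity) (by positivity),
    le_div_iff₀ (by positivity)]
  nlinarith [sq_nonneg (A*u - t*v), mul_pos hA ht]

lemma cast_sum_le_univ (hn : 4 ≤ n) (E : ZMod n → ℝ) (hE : ∀ x, 0 ≤ E x) {y : ℕ}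
    (hy : y ≤ n) : ∑ z ∈ Finset.range y, E (z : ZMod n) ≤ ∑ x : ZMod n, E x := by
  have hinj : ∀ a ∈ Finset.range y, ∀ b ∈ Finset.range y,
      ((a : ZMod n) = (b : ZMod n)) → a = b := by
    intro a ha b hb h
    have := congrArg ZMod.val h
    rwa [ZMod.val_cast_of_lt (by simp at ha; omega), ZMod.val_cast_of_lt (by simp at hb; omega)]
      at this
  rw [← Finset.sum_image hinj]
  exact Finset.sum_le_sum_of_subset_of_nonneg (Finset.subset_univ _)
    (fun x _ _ => hE x)

noncomputable def ebond (n : ℕ) [NeZero n] (ξ : ZMod n → ℝ) (b ρ : ℝ)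
    (g : (ZMod n → Bool) → ℝ) (x : ZMod n) : ℝ :=
  intBer n ρ (fun η => ξ x * rate n b η x * (g (swapCfg n η x) - g η)^2)

lemma ebond_nonneg (hn : 4 ≤ n) {b : ℝ} (hb : -(1:ℝ)/2 < b) (ξ : ZMod n → ℝ)
    (hξ : ∀ x, 0 < ξ x) {ρ : ℝ} (hρ : ρ ∈ Set.Icc (0:ℝ) 1) (g : (ZMod n → Bool) → ℝ)
    (x : ZMod n) : 0 ≤ ebond n ξ b ρ g x := by
  refine intBer_nonneg' hρ fun η => ?_
  have h1 := (hξ x).le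
  have h2 := (rate_pos' hb η x).le
  positivity

lemma dirichlet_eq_ebond (hn : 4 ≤ n) (b : ℝ) (ξ : ZMod n → ℝ) (ρ : ℝ)
    (g : (ZMod n → Bool) → ℝ) :
    dirichlet n ξ b ρ g = (1/2) * ∑ x : ZMod n, ebond n ξ b ρ g x := by
  have key : ∀ x : ZMod n,
      - intBer n ρ (fun η => ξ x * rate n b η x * g η * (g (swapCfg n η x) - g η))
        = (1/2) * ebond n ξ b ρ g x := by
    intro x
    set P := intBer n ρ (fun η => ξ x * rate n b η x * g η * (g (swapCfg n η x) - g η)) with hP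
    have hcov : intBer n ρ
        (fun η => ξ x * rate n b η x * g (swapCfg n η x) * (g η - g (swapCfg n η x))) = P := by
      rw [hP,
        ← intBer_comp_swap' ρ x (fun η => ξ x * rate n b η x * g η * (g (swapCfg n η x) - g η))]
      refine intBer_congr ρ fun η => ?_
      rw [rate_swap' hn, swapCfg_invol']
    have h2P : P + P = - ebond n ξ b ρ g x := by
      nth_rewrite 2 [← hcov]
      rw [hP, ← intBer_add']
      rw [ebond, ← intBer_neg']
      refine intBer_congr ρ fun η => ?_
      ring
    linarith
  unfold dirichlet gen
  rw [intBer_congr ρ (g := fun η => ∑ x : ZMod n,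
        ξ x * rate n b η x * g η * (g (swapCfg n η x) - g η))
      (fun η => by rw [Finset.mul_sum]; exact Finset.sum_congr rfl fun x _ => by ring),
    intBer_sum', ← Finset.sum_neg_distrib, Finset.mul_sum]
  exact Finset.sum_congr rfl fun x _ => key x

lemma bond_est (hn : 4 ≤ n) {b : ℝ} (hb : -(1:ℝ)/2 < b) (ξ : ZMod n → ℝ)
    (hξ : ∀ x, 0 < ξ x) {ρ : ℝ} (hρ : ρ ∈ Set.Icc (0:ℝ) 1) {A : ℝ} (hA : 0 < A)
    (g : (ZMod n → Bool) → ℝ) (z : ZMod n) :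
    intBer n ρ (fun η => (ind (η z) - ind (η (z+1))) * g η) ≤
      A/2 * ((1 / ξ z) * intBer n ρ (fun η => 1 / rate n b η z))
        + 1/(2*A) * ((1/2) * ebond n ξ b ρ g z) := by
  set h : (ZMod n → Bool) → ℝ := fun η => ind (η z) - ind (η (z+1)) with hh
  set S := intBer n ρ (fun η => h η * g η) with hS
  have hflip : ∀ η, h (swapCfg n η z) = - h η := by
    intro η
    rw [hh]
    simp only [swapCfg_at, swapCfg_at2 hn]
    ring
  have hcov : intBer n ρ (fun η => - (h η * g (swapCfg n η z))) = S := by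
    rw [hS, ← intBer_comp_swap' ρ z (fun η => h η * g η)]
    refine intBer_congr ρ fun η => ?_
    rw [hflip η]; ring
  have h2S : S + S = intBer n ρ (fun η => h η * (g η - g (swapCfg n η z))) := by
    nth_rewrite 2 [← hcov]
    rw [hS, ← intBer_add']
    exact intBer_congr ρ fun η => by ring
  have hpt : ∀ η, h η * (g η - g (swapCfg n η z)) ≤
      A/2 * ((1 / ξ z) * (1 / rate n b η z))
        + 1/(2*A) * (ξ z * rate n b η z * (g (swapCfg n η z) - g η)^2) := by
    intro η
    have ht : 0 < ξ z * rate n b η z := mul_pos (hξ z) (rate_pos' hb η z)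
    have hy := young' (u := h η) (v := g η - g (swapCfg n η z)) ht hA
    have hsq : (h η)^2 ≤ 1 := by rw [hh]; exact ind_sub_sq_le' _ _
    have hb1 : A / (2*(ξ z * rate n b η z)) * (h η)^2
        ≤ A/2 * ((1 / ξ z) * (1 / rate n b η z)) := by
      have h1 : A / (2*(ξ z * rate n b η z)) * (h η)^2 ≤ A / (2*(ξ z * rate n b η z)) * 1 :=
        mul_le_mul_of_nonneg_left hsq (by positivity)
      calc A / (2*(ξ z * rate n b η z)) * (h η)^2
          ≤ A / (2*(ξ z * rate n b η z)) * 1 := h1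
        _ = A/2 * ((1 / ξ z) * (1 / rate n b η z)) := by
            field_simp
    have hb2 : (ξ z * rate n b η z) / (2*A) * (g η - g (swapCfg n η z))^2
        = 1/(2*A) * (ξ z * rate n b η z * (g (swapCfg n η z) - g η)^2) := by
      rw [show (g η - g (swapCfg n η z))^2 = (g (swapCfg n η z) - g η)^2 by ring]
      ring
    linarith [hy, hb1, hb2.le, hb2]
  have hmain : S + S ≤ 2 * (A/2 * ((1 / ξ z) * intBer n ρ (fun η => 1 / rate n b η z))
      + 1/(2*A) * ((1/2) * ebond n ξ b ρ g z)) := by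
    rw [h2S]
    calc intBer n ρ (fun η => h η * (g η - g (swapCfg n η z)))
        ≤ intBer n ρ (fun η => A/2 * ((1 / ξ z) * (1 / rate n b η z))
            + 1/(2*A) * (ξ z * rate n b η z * (g (swapCfg n η z) - g η)^2)) :=
          intBer_mono' hρ hpt
      _ = A/2 * ((1 / ξ z) * intBer n ρ (fun η => 1 / rate n b η z))
            + 1/(2*A) * ebond n ξ b ρ g z := by
          rw [intBer_add']
          congr 1
          · rw [intBer_congr ρ (g := fun η => (A/2 * (1/ξ z)) * (1 / rate n b η z))
              (fun η => by ring), intBer_smul']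
            ring
          · rw [ebond, ← intBer_smul']
      _ ≤ 2 * (A/2 * ((1 / ξ z) * intBer n ρ (fun η => 1 / rate n b η z))
            + 1/(2*A) * ((1/2) * ebond n ξ b ρ g z)) := by
          have hI : 0 ≤ (1 / ξ z) * intBer n ρ (fun η => 1 / rate n b η z) := by
            refine mul_nonneg (one_div_nonneg.mpr (hξ z).le) (intBer_nonneg' hρ fun η => ?_)
            have := rate_pos' hb η z
            positivity
          nlinarith [mul_nonneg (le_of_lt (half_pos hA)) hI]
  linarith

end AuxLemmas

/-- the key estimate replacing `η̄(0)` by the local average `η̄^ℓ(0)`: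
`∫ (η̄(0) − η̄^ℓ(0)) g dν_ρ ≤ (A/(2ℓ)) ∑_y ∑_z (1/ξ_z) ∫ (1/c_{z,z+1}) dν_ρ + (1/(2A)) D_n(g)`. -/

theorem integral_localAverage_le (n : ℕ) [NeZero n] (hn : 4 ≤ n) (b : ℝ) (hb : -(1:ℝ)/2 < b)
    (ξ : ZMod n → ℝ) (hξ : ∀ x, 0 < ξ x) (ρ : ℝ) (hρ : ρ ∈ Set.Icc (0:ℝ) 1)
    (A : ℝ) (hA : 0 < A) (ℓ : ℕ) (hℓ : 1 ≤ ℓ) (hℓn : ℓ ≤ n)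
    (g : (ZMod n → Bool) → ℝ) :
    intBer n ρ (fun η =>
        ((ind (η 0) - ρ) - (1 / (ℓ:ℝ)) * ∑ y ∈ Finset.range ℓ, (ind (η (y : ZMod n)) - ρ))
          * g η) ≤
      (A / (2 * (ℓ:ℝ))) * ∑ y ∈ Finset.range ℓ, ∑ z ∈ Finset.range y,
          (1 / ξ (z : ZMod n)) * intBer n ρ (fun η => 1 / rate n b η (z : ZMod n))
        + (1 / (2 * A)) * dirichlet n ξ b ρ g := by
  have hℓR : (0:ℝ) < (ℓ:ℝ) := by exact_mod_cast hℓ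
  have hne : (ℓ:ℝ) ≠ 0 := ne_of_gt hℓR
  have hcast : ∀ z : ℕ, (((z+1 : ℕ)) : ZMod n) = (z : ZMod n) + 1 := fun z => by push_cast; ring
  -- pointwise rewrite of the integrand
  have hpt : ∀ η : ZMod n → Bool,
      ((ind (η 0) - ρ) - (1 / (ℓ:ℝ)) * ∑ y ∈ Finset.range ℓ, (ind (η (y : ZMod n)) - ρ)) * g η
      = ∑ y ∈ Finset.range ℓ, (1/(ℓ:ℝ)) *
          ∑ z ∈ Finset.range y,
            ((ind (η (z : ZMod n)) - ind (η ((z : ZMod n) + 1))) * g η) := by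
    intro η
    have htel : ∀ y : ℕ,
        ∑ z ∈ Finset.range y, (ind (η (z : ZMod n)) - ind (η ((z : ZMod n) + 1)))
          = ind (η 0) - ind (η (y : ZMod n)) := by
      intro y
      have h := Finset.sum_range_sub' (f := fun z : ℕ => ind (η (z : ZMod n))) y
      simp only [Nat.cast_zero] at h
      rw [← h]
      exact Finset.sum_congr rfl fun z _ => by rw [hcast]
    have h1 : ∀ y ∈ Finset.range ℓ,
        (1/(ℓ:ℝ)) * ∑ z ∈ Finset.range y,
            ((ind (η (z : ZMod n)) - ind (η ((z : ZMod n) + 1))) * g η)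
          = (1/(ℓ:ℝ)) * ((ind (η 0) - ind (η (y : ZMod n))) * g η) := by
      intro y _
      rw [← Finset.sum_mul, htel]
    rw [Finset.sum_congr rfl h1, ← Finset.mul_sum, ← Finset.sum_mul]
    simp only [Finset.sum_sub_distrib, Finset.sum_const, Finset.card_range, nsmul_eq_mul]
    have hx : (1/(ℓ:ℝ)) * (ℓ:ℝ) = 1 := by field_simp
    linear_combination (-(g η) * (ind (η 0) - ρ)) * hx
  rw [intBer_congr ρ hpt, intBer_sum']
  have hform : ∀ y, intBer n ρ (fun η => (1/(ℓ:ℝ)) *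
      ∑ z ∈ Finset.range y, ((ind (η (z : ZMod n)) - ind (η ((z : ZMod n) + 1))) * g η))
      = (1/(ℓ:ℝ)) * ∑ z ∈ Finset.range y,
          intBer n ρ (fun η => (ind (η (z : ZMod n)) - ind (η ((z : ZMod n) + 1))) * g η) := by
    intro y
    rw [intBer_smul', intBer_sum']
  have hD := dirichlet_eq_ebond (n := n) hn b ξ ρ g
  have hbound : ∀ y ∈ Finset.range ℓ,
      intBer n ρ (fun η => (1/(ℓ:ℝ)) *
        ∑ z ∈ Finset.range y, ((ind (η (z : ZMod n)) - ind (η ((z : ZMod n) + 1))) * g η))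
      ≤ (1/(ℓ:ℝ)) * (A/2 * ∑ z ∈ Finset.range y,
            ((1 / ξ (z : ZMod n)) * intBer n ρ (fun η => 1 / rate n b η (z : ZMod n)))
          + 1/(2*A) * dirichlet n ξ b ρ g) := by
    intro y hy
    rw [hform y]
    refine mul_le_mul_of_nonneg_left ?_ (by positivity)
    have step1 : ∑ z ∈ Finset.range y,
        intBer n ρ (fun η => (ind (η (z : ZMod n)) - ind (η ((z : ZMod n) + 1))) * g η)
        ≤ ∑ z ∈ Finset.range y,
          (A/2 * ((1 / ξ (z : ZMod n)) * intBer n ρ (fun η => 1 / rate n b η (z : ZMod n)))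
            + 1/(2*A) * ((1/2) * ebond n ξ b ρ g (z : ZMod n))) :=
      Finset.sum_le_sum fun z _ => bond_est hn hb ξ hξ hρ hA g (z : ZMod n)
    have step2 : ∑ z ∈ Finset.range y, (1/(2*A)) * ((1/2) * ebond n ξ b ρ g (z : ZMod n))
        ≤ 1/(2*A) * dirichlet n ξ b ρ g := by
      rw [hD, ← Finset.mul_sum]
      refine mul_le_mul_of_nonneg_left ?_ (by positivity)
      rw [Finset.mul_sum]
      exact cast_sum_le_univ hn (fun x => (1/2) * ebond n ξ b ρ g x)
        (fun x => mul_nonneg (by norm_num) (ebond_nonneg hn hb ξ hξ hρ g x))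
        (le_trans (le_of_lt (Finset.mem_range.mp hy)) hℓn)
    calc ∑ z ∈ Finset.range y,
          intBer n ρ (fun η => (ind (η (z : ZMod n)) - ind (η ((z : ZMod n) + 1))) * g η)
        ≤ ∑ z ∈ Finset.range y,
          (A/2 * ((1 / ξ (z : ZMod n)) * intBer n ρ (fun η => 1 / rate n b η (z : ZMod n)))
            + 1/(2*A) * ((1/2) * ebond n ξ b ρ g (z : ZMod n))) := step1
      _ = A/2 * ∑ z ∈ Finset.range y,
            ((1 / ξ (z : ZMod n)) * intBer n ρ (fun η => 1 / rate n b η (z : ZMod n)))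
          + ∑ z ∈ Finset.range y, (1/(2*A)) * ((1/2) * ebond n ξ b ρ g (z : ZMod n)) := by
          rw [Finset.sum_add_distrib, Finset.mul_sum]
      _ ≤ A/2 * ∑ z ∈ Finset.range y,
            ((1 / ξ (z : ZMod n)) * intBer n ρ (fun η => 1 / rate n b η (z : ZMod n)))
          + 1/(2*A) * dirichlet n ξ b ρ g := by linarith [step2]
  calc ∑ y ∈ Finset.range ℓ, intBer n ρ (fun η => (1/(ℓ:ℝ)) *
        ∑ z ∈ Finset.range y, ((ind (η (z : ZMod n)) - ind (η ((z : ZMod n) + 1))) * g η))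
      ≤ ∑ y ∈ Finset.range ℓ, (1/(ℓ:ℝ)) * (A/2 * ∑ z ∈ Finset.range y,
            ((1 / ξ (z : ZMod n)) * intBer n ρ (fun η => 1 / rate n b η (z : ZMod n)))
          + 1/(2*A) * dirichlet n ξ b ρ g) := Finset.sum_le_sum hbound
    _ = (A / (2 * (ℓ:ℝ))) * ∑ y ∈ Finset.range ℓ, ∑ z ∈ Finset.range y,
            (1 / ξ (z : ZMod n)) * intBer n ρ (fun η => 1 / rate n b η (z : ZMod n))
        + (1 / (2 * A)) * dirichlet n ξ b ρ g := by
        rw [show (fun y => (1/(ℓ:ℝ)) * (A/2 * ∑ z ∈ Finset.range y,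
              ((1 / ξ (z : ZMod n)) * intBer n ρ (fun η => 1 / rate n b η (z : ZMod n)))
            + 1/(2*A) * dirichlet n ξ b ρ g))
          = (fun y => (A / (2 * (ℓ:ℝ))) * ∑ z ∈ Finset.range y,
              ((1 / ξ (z : ZMod n)) * intBer n ρ (fun η => 1 / rate n b η (z : ZMod n)))
            + (1/(ℓ:ℝ)) * (1/(2*A) * dirichlet n ξ b ρ g)) from funext fun y => by
            field_simp]
        rw [Finset.sum_add_distrib, ← Finset.mul_sum, Finset.sum_const, Finset.card_range,
          nsmul_eq_mul]
        field_simp
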